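/- (Gabber's lemma, abstract form) Let A : ℤ^m → ℤ^k be a homomorphism given by an integer matrix in which every column has Euclidean norm at most c. Then the torsion subgroup of the cokernel ℤ^k / im(A) has cardinality at most c^m (when c ≥ 1). -/

import Mathlib

/-!
Choose columns `σ` of `A` forming a `ℚ`-basis of its column space and rows `r` for which the
square minor `B = A[r, σ]` is nonsingular. The projection `π` onto the coordinates `r` is
injective on the rational column space, so it embeds the torsion of `ℤ^k ⧸ im A` into
`ℤ^n ⧸ π(im A)`, a quotient of `ℤ^n ⧸ im B`, which has `|det B|` elements. By Hadamard's
inequality `|det B|` is at most the product of the column norms of `B`, each bounded by `c`;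
finally `n ≤ m` and `c ≥ 1`.
-/

open Matrix Submodule

theorem Fintype.sum_comp_le_sum_of_injective {ι κ M : Type*} [Fintype ι] [Fintype κ]
    [AddCommMonoid M] [PartialOrder M] [IsOrderedAddMonoid M] {f : κ → M} (hf : 0 ≤ f)
    {g : ι → κ} (hg : Function.Injective g) : ∑ i, f (g i) ≤ ∑ j, f j :=
  calc ∑ i, f (g i) = ∑ j ∈ Finset.univ.map ⟨g, hg⟩, f j :=
        (Finset.sum_map Finset.univ ⟨g, hg⟩ f).symm
    _ ≤ ∑ j, f j := Finset.sum_le_univ_sum_of_nonneg hf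

/-- Hadamard's inequality: in the standard basis of `EuclideanSpace ℝ (Fin n)` the determinant
is a volume form, and a volume form is bounded by the product of the norms of its arguments. -/
theorem Matrix.abs_det_le_prod_sqrt_sum_sq_col {ι : Type*} [Fintype ι] [DecidableEq ι]
    (M : Matrix ι ι ℝ) : |M.det| ≤ ∏ j, √(∑ i, M i j ^ 2) := by
  suffices h : ∀ {n : ℕ} (M : Matrix (Fin n) (Fin n) ℝ),
      |M.det| ≤ ∏ j, √(∑ i, M i j ^ 2) by
    let e := Fintype.equivFin ι
    simpa [det_reindex_self, ← e.symm.prod_comp, ← e.symm.sum_comp] using h (reindex e e M)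
  intro n M
  have : Fact (Module.finrank ℝ (EuclideanSpace ℝ (Fin n)) = n) :=
    ⟨finrank_euclideanSpace_fin⟩
  let b := EuclideanSpace.basisFun (Fin n) ℝ
  let v : Fin n → EuclideanSpace ℝ (Fin n) := fun j => WithLp.toLp 2 (M.col j)
  have hM : b.toBasis.toMatrix v = M := by ext i j; simp [b, v, Module.Basis.toMatrix_apply]
  have h := b.toBasis.orientation.abs_volumeForm_apply_le v
  rw [Orientation.volumeForm_robust' _ b, Module.Basis.det_apply, hM] at h
  simpa [v, EuclideanSpace.norm_eq] using h

theorem Matrix.exists_submatrix_det_ne_zero_of_linearIndependent_col {K m n : Type*} [Field K]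
    [Fintype m] [Fintype n] [DecidableEq n] (A : Matrix m n K) (hA : LinearIndependent K A.col) :
    ∃ r : n → m, Function.Injective r ∧ (A.submatrix r id).det ≠ 0 := by
  have hrows : span K (Set.range A.row) = ⊤ := by
    refine eq_top_of_finrank_eq ?_
    rw [← rank_eq_finrank_span_row, rank_eq_finrank_span_cols, finrank_span_eq_card hA,
      Module.finrank_fintype_fun_eq_card]
  obtain ⟨κ, τ, hτ, hspan, hli⟩ := exists_linearIndependent' K A.row
  let e := (Module.Basis.mk hli (by rw [hspan, hrows])).indexEquiv (Pi.basisFun K n)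
  refine ⟨τ ∘ e.symm, hτ.comp e.symm.injective, ?_⟩
  have : LinearIndependent K (A.submatrix (τ ∘ e.symm) id).row := hli.comp _ e.symm.injective
  exact ((isUnit_iff_isUnit_det _).mp (linearIndependent_rows_iff_isUnit.mp this)).ne_zero

theorem Matrix.natCard_quotient_range_mulVecLin {n : Type*} [Fintype n] [DecidableEq n]
    (B : Matrix n n ℤ) (hB : B.det ≠ 0) :
    Nat.card ((n → ℤ) ⧸ LinearMap.range B.mulVecLin) = B.det.natAbs := by
  rw [← natAbs_det_equiv _
    (LinearEquiv.ofInjective B.mulVecLin (mulVec_injective_of_det_ne_zero hB))]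
  congr 1
  exact LinearMap.det_toLin' B

theorem Submodule.natCard_torsion_le_natCard_quotient_map {R M G : Type*} [CommRing R]
    [AddCommGroup M] [Module R M] [AddCommGroup G] [Module R G] (N : Submodule R M)
    (π : M →ₗ[R] G) [Finite (G ⧸ N.map π)]
    (hπ : ∀ d : M, ∀ a ∈ nonZeroDivisors R, a • d ∈ N → π d = 0 → d = 0) :
    Nat.card (torsion R (M ⧸ N)) ≤ Nat.card (G ⧸ N.map π) := by
  let φ := N.mapQ (N.map π) π (le_comap_map π N) ∘ₗ (torsion R (M ⧸ N)).subtype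
  refine Nat.card_le_card_of_injective φ ?_
  rw [← LinearMap.ker_eq_bot, eq_bot_iff]
  rintro ⟨z, hz⟩ hφz
  obtain ⟨w, rfl⟩ := N.mkQ_surjective z
  obtain ⟨a, ha⟩ := (mem_torsion_iff _).mp hz
  have haw : (a : R) • w ∈ N := (Quotient.mk_eq_zero N).mp ha
  obtain ⟨u, hu, huw⟩ : π w ∈ N.map π := by simpa [φ] using hφz
  have hwu : w - u = 0 :=
    hπ _ a a.2 (smul_sub (a : R) w u ▸ N.sub_mem haw (N.smul_mem _ hu)) (by simp [huw])
  simpa [sub_eq_zero.mp hwu] using hu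

section Minor

variable {k m n : Type*} [Fintype m] [Fintype n] [DecidableEq n]

theorem Matrix.eq_zero_of_mem_range_of_comp_eq_zero {K : Type*} [Field K] (A : Matrix k m K)
    (r : n → k) (σ : n → m) (hdet : (A.submatrix r σ).det ≠ 0)
    (hspan : span K (Set.range (A.col ∘ σ)) = span K (Set.range A.col))
    {w : k → K} (hw : w ∈ LinearMap.range A.mulVecLin) (hwr : w ∘ r = 0) : w = 0 := by
  obtain ⟨c, rfl⟩ : w ∈ LinearMap.range (A.submatrix id σ).mulVecLin := by
    rw [range_mulVecLin, ← hspan] at hw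
    rwa [range_mulVecLin]
  have hc : (A.submatrix r σ) *ᵥ c = 0 := hwr
  simp [eq_zero_of_mulVec_eq_zero hdet hc]

theorem Matrix.eq_zero_of_smul_mem_range_of_comp_eq_zero (A : Matrix k m ℤ) (r : n → k)
    (σ : n → m) (hdet : (A.submatrix r σ).det ≠ 0)
    (hspan : span ℚ (Set.range ((A.map (Int.cast : ℤ → ℚ)).col ∘ σ)) =
      span ℚ (Set.range (A.map (Int.cast : ℤ → ℚ)).col))
    {d : k → ℤ} {a : ℤ} (ha : a ≠ 0) (had : a • d ∈ LinearMap.range A.mulVecLin)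
    (hdr : d ∘ r = 0) : d = 0 := by
  obtain ⟨x, hx⟩ := had
  have hd : (Int.cast ∘ d : k → ℚ) ∈
      LinearMap.range (A.map (Int.cast : ℤ → ℚ)).mulVecLin := by
    refine ⟨(a : ℚ)⁻¹ • (Int.cast ∘ x), funext fun i => ?_⟩
    have hAx : (A.map (Int.cast : ℤ → ℚ) *ᵥ (Int.cast ∘ x)) i = a * d i := by
      have h := (RingHom.map_mulVec (Int.castRingHom ℚ) A x i).symm
      rw [show A *ᵥ x = a • d from hx] at h
      simpa using h
    simp only [mulVecLin_apply, mulVec_smul, Pi.smul_apply, smul_eq_mul, hAx,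
      Function.comp_apply]
    field_simp
  have hdetℚ : ((A.submatrix r σ).map (Int.cast : ℤ → ℚ)).det ≠ 0 := by
    rw [← Int.cast_det]
    exact_mod_cast hdet
  have hdrℚ : (Int.cast ∘ d : k → ℚ) ∘ r = 0 := by
    funext i
    simp [show d (r i) = 0 from congrFun hdr i]
  have h :=
    (A.map (Int.cast : ℤ → ℚ)).eq_zero_of_mem_range_of_comp_eq_zero r σ hdetℚ hspan hd hdrℚ
  funext i
  simpa using congrFun h i

theorem Matrix.natCard_torsion_le_natAbs_det_submatrix (A : Matrix k m ℤ) (r : n → k)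
    (σ : n → m) (hdet : (A.submatrix r σ).det ≠ 0)
    (hspan : span ℚ (Set.range ((A.map (Int.cast : ℤ → ℚ)).col ∘ σ)) =
      span ℚ (Set.range (A.map (Int.cast : ℤ → ℚ)).col)) :
    Nat.card (torsion ℤ ((k → ℤ) ⧸ LinearMap.range A.mulVecLin)) ≤
      (A.submatrix r σ).det.natAbs := by
  let π := LinearMap.funLeft ℤ ℤ r
  have hle : LinearMap.range (A.submatrix r σ).mulVecLin ≤
      (LinearMap.range A.mulVecLin).map π := by
    rw [range_mulVecLin, range_mulVecLin, map_span, span_le]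
    rintro _ ⟨i, rfl⟩
    exact subset_span ⟨A.col (σ i), ⟨σ i, rfl⟩, rfl⟩
  have hcard := natCard_quotient_range_mulVecLin _ hdet
  have : Finite ((n → ℤ) ⧸ LinearMap.range (A.submatrix r σ).mulVecLin) :=
    Nat.finite_of_card_ne_zero (by rw [hcard]; exact Int.natAbs_ne_zero.mpr hdet)
  have : Finite ((n → ℤ) ⧸ (LinearMap.range A.mulVecLin).map π) :=
    Finite.of_surjective _ (factor_surjective hle)
  calc Nat.card (torsion ℤ ((k → ℤ) ⧸ LinearMap.range A.mulVecLin))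
      ≤ Nat.card ((n → ℤ) ⧸ (LinearMap.range A.mulVecLin).map π) :=
        natCard_torsion_le_natCard_quotient_map _ π fun d a ha had hπd =>
          A.eq_zero_of_smul_mem_range_of_comp_eq_zero r σ hdet hspan
            (nonZeroDivisors.ne_zero ha) had hπd
    _ ≤ Nat.card ((n → ℤ) ⧸ LinearMap.range (A.submatrix r σ).mulVecLin) :=
        Nat.card_le_card_of_surjective _ (factor_surjective hle)
    _ = (A.submatrix r σ).det.natAbs := hcard

end Minor

/-- **Gabber's lemma, abstract form.** Let `A : ℤ^m → ℤ^k` be given by an integer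
matrix each of whose columns has Euclidean norm at most `c`, with `c ≥ 1`. Then the torsion
subgroup of the cokernel `ℤ^k / im(A)` has cardinality at most `c^m`. -/
theorem stmt9 (k m : ℕ) (A : Matrix (Fin k) (Fin m) ℤ) (c : ℝ) (hc : 1 ≤ c)
    (hcol : ∀ j : Fin m, Real.sqrt (∑ i : Fin k, ((A i j : ℝ)) ^ 2) ≤ c) :
    (Nat.card
        (Submodule.torsion ℤ ((Fin k → ℤ) ⧸ LinearMap.range (Matrix.mulVecLin A))) : ℝ)
      ≤ c ^ m := by
  classical
  obtain ⟨κ, σ, hσ, hspan, hli⟩ :=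
    exists_linearIndependent' ℚ (A.map (Int.cast : ℤ → ℚ)).col
  have : Fintype κ := @Fintype.ofFinite κ (Finite.of_injective σ hσ)
  obtain ⟨r, hr, hrdet⟩ := ((A.map (Int.cast : ℤ → ℚ)).submatrix id σ)
    |>.exists_submatrix_det_ne_zero_of_linearIndependent_col hli
  have hdet : (A.submatrix r σ).det ≠ 0 := by
    have : ((A.submatrix r σ).map (Int.cast : ℤ → ℚ)).det ≠ 0 := hrdet
    rwa [← Int.cast_det, Int.cast_ne_zero] at this
  have hcolB (j : κ) : √(∑ i, (A (r i) (σ j) : ℝ) ^ 2) ≤ c :=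
    (Real.sqrt_le_sqrt (Fintype.sum_comp_le_sum_of_injective
      (f := fun i => (A i (σ j) : ℝ) ^ 2) (fun _ => sq_nonneg _) hr)).trans (hcol (σ j))
  calc (Nat.card (torsion ℤ ((Fin k → ℤ) ⧸ LinearMap.range A.mulVecLin)) : ℝ)
      ≤ (A.submatrix r σ).det.natAbs := by
        exact_mod_cast A.natCard_torsion_le_natAbs_det_submatrix r σ hdet hspan
    _ = |((A.submatrix r σ).map (Int.cast : ℤ → ℝ)).det| := by
        rw [← Int.cast_det, Nat.cast_natAbs, Int.cast_abs]
    _ ≤ ∏ j, √(∑ i, (A (r i) (σ j) : ℝ) ^ 2) := abs_det_le_prod_sqrt_sum_sq_col _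
    _ ≤ ∏ _j : κ, c := Finset.prod_le_prod (fun _ _ => Real.sqrt_nonneg _) fun j _ => hcolB j
    _ = c ^ Fintype.card κ := by rw [Finset.prod_const, Finset.card_univ]
    _ ≤ c ^ m := pow_le_pow_right₀ hc (by simpa using Fintype.card_le_of_injective σ hσ)
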